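/- arXiv:2510.09206 — 6 statements merged into one kernel-verified Lean document; each statement's English description precedes it below -/
import Mathlib

section
/- Let f be a probability density function on ℝ^d that is log-concave and symmetric (f(-x) = f(x) for all x). Then ∫_{ℝ^d} f(x)² dx ≥ f(0) / 2^d. Moreover the essential supremum of f ⋆ f equals (f ⋆ f)(0) = ∫_{ℝ^d} f(x)² dx. -/
open MeasureTheory ENNReal

/-- Convolution of two functions on `ℝ^d`: `(f ⋆ g)(x) = ∫ f(t) g(x - t) dt`. -/
noncomputable def convE {d : ℕ} (f g : EuclideanSpace ℝ (Fin d) → ℝ) :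
    EuclideanSpace ℝ (Fin d) → ℝ :=
  fun x => ∫ t, f t * g (x - t)

/-- A nonnegative function on `ℝ^d` is log-concave iff
`f((1-t)x + ty) ≥ f(x)^{1-t} f(y)^t` for all `x, y` and `t ∈ [0,1]`
(equivalently `f = e^{-V}` with `V : ℝ^d → ℝ ∪ {∞}` convex). -/
def LogConcaveFunE {d : ℕ} (f : EuclideanSpace ℝ (Fin d) → ℝ) : Prop :=
  ∀ (x y : EuclideanSpace ℝ (Fin d)) (t : ℝ), 0 ≤ t → t ≤ 1 →
    f x ^ (1 - t) * f y ^ t ≤ f ((1 - t) • x + t • y)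

/-- Essential supremum of a function on `ℝ^d`, valued in `ℝ≥0∞`. -/
noncomputable def essSupNNE {d : ℕ} (f : EuclideanSpace ℝ (Fin d) → ℝ) : ℝ≥0∞ :=
  essSup (fun x => ENNReal.ofReal (f x)) volume

/-!
Log-concavity at the midpoint gives `f x * f y ≤ f ((x + y) / 2) ^ 2`. With `y = -x` and symmetry
this says that `f` peaks at `0`; with `x = 0` and integration it gives `f 0 ≤ 2 ^ d ∫ f²`, the
factor `2 ^ d` being the Jacobian of `x ↦ x / 2`. Since `f ∈ L¹ ∩ L^∞ ⊆ L²`, the convolution `f ⋆ f`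
is continuous, and by AM-GM it is bounded by `∫ f²`, which symmetry makes its value at `0`; for a
continuous function the essential supremum is the supremum.
-/

open scoped RealInnerProductSpace

theorem Continuous.essSup_eq_iSup {α β : Type*} [TopologicalSpace α] [MeasurableSpace α]
    {μ : Measure α} [μ.IsOpenPosMeasure] [CompleteLinearOrder β] [TopologicalSpace β]
    [OrderTopology β] {f : α → β} (hf : Continuous f) :
    essSup f μ = ⨆ x, f x :=
  (iSup_eq_essSup fun x _ hx => (isOpen_lt continuous_const hf).measure_ne_zero μ ⟨x, hx⟩).symm

section Convolution

variable {d : ℕ}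

/-- `convE f g x` is the `L²` inner product of `f` with `t ↦ g (x - t)`, and translation is
continuous on `L²`. -/
theorem continuous_convE {f g : EuclideanSpace ℝ (Fin d) → ℝ} (hf : MemLp f 2) (hg : MemLp g 2) :
    Continuous (convE f g) := by
  have hsub : ∀ x : EuclideanSpace ℝ (Fin d),
      MeasurePreserving (fun t => x - t) volume volume :=
    fun x => Measure.measurePreserving_sub_left volume x
  let C : EuclideanSpace ℝ (Fin d) → C(EuclideanSpace ℝ (Fin d), EuclideanSpace ℝ (Fin d)) :=
    fun x => ⟨fun t => x - t, continuous_const.sub continuous_id⟩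
  have hC : Continuous C :=
    ContinuousMap.continuous_of_continuous_uncurry _ (continuous_fst.sub continuous_snd)
  let T : EuclideanSpace ℝ (Fin d) → Lp ℝ 2 (volume : Measure (EuclideanSpace ℝ (Fin d))) :=
    fun x => Lp.compMeasurePreserving (C x) (hsub x) (hg.toLp g)
  have hT : Continuous T :=
    (Lp.compMeasurePreserving_continuous volume volume ℝ (by simp)).comp
      (continuous_const.prodMk (hC.subtype_mk fun x => hsub x))
  have hconv : convE f g = fun x => ⟪hf.toLp f, T x⟫ := by
    funext x
    rw [L2.inner_def]
    refine (integral_congr_ae ?_).symm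
    filter_upwards [hf.coeFn_toLp, Lp.coeFn_compMeasurePreserving (f := ⇑(C x)) (hg.toLp g) (hsub x),
      (hsub x).quasiMeasurePreserving.ae_eq_comp hg.coeFn_toLp] with t hft hTt hgt
    simp only [RCLike.inner_apply, starRingEnd_apply, star_trivial, T, hTt, Function.comp_apply]
    rw [hft, mul_comm]
    exact congrArg (f t * ·) hgt
  rw [hconv]
  exact continuous_const.inner hT

theorem convE_self_apply_zero {f : EuclideanSpace ℝ (Fin d) → ℝ} (hsym : ∀ x, f (-x) = f x) :
    convE f f 0 = ∫ x, f x ^ 2 := by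
  simp only [convE, zero_sub, hsym, sq]

theorem convE_self_le_integral_sq {f : EuclideanSpace ℝ (Fin d) → ℝ} (hf0 : ∀ x, 0 ≤ f x)
    (hf2 : Integrable (fun x => f x ^ 2)) (x : EuclideanSpace ℝ (Fin d)) :
    convE f f x ≤ ∫ t, f t ^ 2 :=
  calc convE f f x ≤ ∫ t, (f t ^ 2 + f (x - t) ^ 2) / 2 :=
        integral_mono_of_nonneg (ae_of_all _ fun t => mul_nonneg (hf0 t) (hf0 _))
          ((hf2.add (hf2.comp_sub_left x)).div_const 2)
          (ae_of_all _ fun t => by nlinarith [sq_nonneg (f t - f (x - t))])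
    _ = ∫ t, f t ^ 2 := by
        rw [integral_div, integral_add hf2 (hf2.comp_sub_left x),
          integral_sub_left_eq_self (fun t => f t ^ 2) volume x]
        ring

end Convolution

namespace LogConcaveFunE

variable {d : ℕ} {f : EuclideanSpace ℝ (Fin d) → ℝ}

theorem mul_le_sq_midpoint (hflc : LogConcaveFunE f) (hf0 : ∀ x, 0 ≤ f x)
    (x y : EuclideanSpace ℝ (Fin d)) :
    f x * f y ≤ f ((2⁻¹ : ℝ) • (x + y)) ^ 2 := by
  have h := hflc x y (1 / 2) (by norm_num) (by norm_num)
  rw [show (1 : ℝ) - 1 / 2 = 1 / 2 by norm_num, ← Real.sqrt_eq_rpow, ← Real.sqrt_eq_rpow,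
    ← Real.sqrt_mul (hf0 x), show (1 / 2 : ℝ) • x + (1 / 2 : ℝ) • y = (2⁻¹ : ℝ) • (x + y) by
      module] at h
  calc f x * f y = √(f x * f y) ^ 2 := (Real.sq_sqrt (mul_nonneg (hf0 x) (hf0 y))).symm
    _ ≤ _ := pow_le_pow_left₀ (Real.sqrt_nonneg _) h 2

theorem le_apply_zero (hflc : LogConcaveFunE f) (hf0 : ∀ x, 0 ≤ f x)
    (hsym : ∀ x, f (-x) = f x) (x : EuclideanSpace ℝ (Fin d)) :
    f x ≤ f 0 := by
  have h := hflc.mul_le_sq_midpoint hf0 x (-x)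
  rw [hsym, add_neg_cancel, smul_zero, ← sq] at h
  exact (pow_le_pow_iff_left₀ (hf0 x) (hf0 0) two_ne_zero).1 h

theorem apply_zero_mul_integral_le (hflc : LogConcaveFunE f) (hf0 : ∀ x, 0 ≤ f x)
    (hfi : Integrable f) (hf2 : Integrable (fun x => f x ^ 2)) :
    f 0 * ∫ x, f x ≤ 2 ^ d * ∫ x, f x ^ 2 :=
  calc f 0 * ∫ x, f x = ∫ x, f 0 * f x := (integral_const_mul _ _).symm
    _ ≤ ∫ x, f ((2⁻¹ : ℝ) • x) ^ 2 :=
        integral_mono (hfi.const_mul _) (hf2.comp_smul (by norm_num))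
          fun x => by simpa using hflc.mul_le_sq_midpoint hf0 0 x
    _ = 2 ^ d * ∫ x, f x ^ 2 := by
        rw [Measure.integral_comp_smul volume (fun y => f y ^ 2), finrank_euclideanSpace_fin,
          smul_eq_mul, ← inv_pow, inv_inv, abs_of_nonneg (by positivity)]

end LogConcaveFunE

theorem symmetric_logconcave_self_conv_general (d : ℕ) (f : EuclideanSpace ℝ (Fin d) → ℝ)
    (hf0 : ∀ x, 0 ≤ f x) (hf1 : ∫ x, f x = 1)
    (hflc : LogConcaveFunE f) (hsym : ∀ x, f (-x) = f x) :
    f 0 / 2 ^ d ≤ ∫ x, (f x) ^ 2 ∧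
    essSupNNE (convE f f) = ENNReal.ofReal (convE f f 0) ∧
    convE f f 0 = ∫ x, (f x) ^ 2 := by
  have hfi : Integrable f := .of_integral_ne_zero (by rw [hf1]; exact one_ne_zero)
  have hf2 : Integrable (fun x => f x ^ 2) := by
    simp_rw [sq]
    exact hfi.bdd_mul hfi.aestronglyMeasurable <| ae_of_all _ fun x => by
      rw [Real.norm_of_nonneg (hf0 x)]
      exact hflc.le_apply_zero hf0 hsym x
  have hf_memLp : MemLp f 2 := (memLp_two_iff_integrable_sq hfi.aestronglyMeasurable).2 hf2
  refine ⟨?_, ?_, convE_self_apply_zero hsym⟩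
  · have h := hflc.apply_zero_mul_integral_le hf0 hfi hf2
    rw [hf1, mul_one] at h
    rwa [div_le_iff₀ (by positivity), mul_comm]
  · have hcont : Continuous fun x => ENNReal.ofReal (convE f f x) :=
      ENNReal.continuous_ofReal.comp (continuous_convE hf_memLp hf_memLp)
    rw [essSupNNE, hcont.essSup_eq_iSup]
    refine le_antisymm (iSup_le fun x => ENNReal.ofReal_le_ofReal ?_) (le_iSup_of_le 0 le_rfl)
    rw [convE_self_apply_zero hsym]
    exact convE_self_le_integral_sq hf0 hf2 x

/-- For a symmetric log-concave probability density `f` on `ℝ^d`: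
`∫ f² ≥ f(0)/2^d`, and `‖f ⋆ f‖_∞ = (f ⋆ f)(0) = ∫ f²`. -/
theorem symmetric_logconcave_self_conv (d : ℕ) (f : EuclideanSpace ℝ (Fin d) → ℝ)
    (hf0 : ∀ x, 0 ≤ f x) (hfm : Measurable f) (hf1 : ∫ x, f x = 1)
    (hflc : LogConcaveFunE f) (hsym : ∀ x, f (-x) = f x) :
    f 0 / 2 ^ d ≤ ∫ x, (f x) ^ 2 ∧
    essSupNNE (convE f f) = ENNReal.ofReal (convE f f 0) ∧
    convE f f 0 = ∫ x, (f x) ^ 2 :=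
  symmetric_logconcave_self_conv_general d f hf0 hf1 hflc hsym
end

section
/- Let U and V be i.i.d. random vectors in ℝ^d with a log-concave density f. Then h_∞(U - V) = h_2(U); that is, the essential supremum of the density of U - V (which is f ⋆ f̌, where f̌(x) = f(-x)) equals ∫_{ℝ^d} f(x)² dx. -/
/-
A log-concave probability density `f` is bounded: by midpoint log-concavity, `f ≥ √(f x * c)` on
the homothetic copy `(x + {f ≥ c}) / 2` of a superlevel set of positive measure, and Markov's
inequality then bounds `f x`. Hence `f ∈ L²`, and the density of `U - V` is the autocorrelation
`g x = ∫ f t f (t - x) dt = ⟪f, f(· - x)⟫_{L²}`. By Cauchy–Schwarz `g ≤ g 0 = ∫ f²`, and `g` is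
continuous by continuity of translation in `L²`; a continuous function attaining its maximum has
that maximum as essential supremum, since every neighbourhood has positive Lebesgue measure.
-/

open MeasureTheory ENNReal

open Filter Topology Pointwise

theorem essSup_eq_of_continuousAt_of_forall_le {X β : Type*} [TopologicalSpace X]
    [MeasurableSpace X] {μ : Measure X} [μ.IsOpenPosMeasure] [CompleteLinearOrder β]
    [TopologicalSpace β] [OrderTopology β] [FirstCountableTopology β] {h : X → β} {x₀ : X}
    (hc : ContinuousAt h x₀) (hmax : ∀ x, h x ≤ h x₀) : essSup h μ = h x₀ := by
  refine le_antisymm (essSup_le_of_ae_le _ (.of_forall hmax)) (not_lt.1 fun hlt => ?_)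
  have hnhds : {x | essSup h μ < h x} ∈ 𝓝 x₀ := hc.eventually (eventually_gt_nhds hlt)
  exact (Measure.measure_pos_of_mem_nhds μ hnhds).ne' meas_essSup_lt

theorem exists_pos_measure_setOf_le_of_integral_pos {α : Type*} [MeasurableSpace α]
    {μ : Measure α} {f : α → ℝ} (hf0 : 0 ≤ f) (hfi : Integrable f μ)
    (hpos : 0 < ∫ x, f x ∂μ) : ∃ c, 0 < c ∧ 0 < μ {x | c ≤ f x} := by
  rw [integral_pos_iff_support_of_nonneg hf0 hfi] at hpos
  have hsupp : Function.support f ⊆ ⋃ n : ℕ, {x | 1 / ((n : ℝ) + 1) ≤ f x} := fun x hx =>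
    have ⟨n, hn⟩ := exists_nat_one_div_lt ((hf0 x).lt_of_ne' hx)
    Set.mem_iUnion.2 ⟨n, hn.le⟩
  by_contra! h
  exact hpos.ne' (measure_mono_null hsupp
    (measure_iUnion_null fun n => nonpos_iff_eq_zero.1 (h _ Nat.one_div_pos_of_nat)))

namespace LogConcaveFunE

variable {d : ℕ} {f : EuclideanSpace ℝ (Fin d) → ℝ}

theorem sqrt_mul_le_midpoint (hflc : LogConcaveFunE f) (hf0 : ∀ x, 0 ≤ f x)
    (x y : EuclideanSpace ℝ (Fin d)) :
    √(f x * f y) ≤ f ((2⁻¹ : ℝ) • x + (2⁻¹ : ℝ) • y) := by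
  have h := hflc x y 2⁻¹ (by norm_num) (by norm_num)
  rw [show (1 : ℝ) - 2⁻¹ = 2⁻¹ by norm_num] at h
  rwa [Real.sqrt_eq_rpow, one_div, Real.mul_rpow (hf0 x) (hf0 y)]

theorem sqrt_mul_mul_measureReal_le_integral (hflc : LogConcaveFunE f) (hf0 : ∀ x, 0 ≤ f x)
    (hfi : Integrable f) (x : EuclideanSpace ℝ (Fin d)) (c : ℝ) :
    √(f x * c) * ((2⁻¹ : ℝ) ^ d * volume.real {y | c ≤ f y}) ≤ ∫ y, f y := by
  rcases (Real.sqrt_nonneg (f x * c)).eq_or_lt with hs | hs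
  · rw [← hs, zero_mul]
    exact integral_nonneg hf0
  set s := √(f x * c)
  have hsub : (2⁻¹ : ℝ) • x +ᵥ (2⁻¹ : ℝ) • {y | c ≤ f y} ⊆ {z | s ≤ f z} := by
    rintro _ ⟨_, ⟨y, hy, rfl⟩, rfl⟩
    exact (Real.sqrt_le_sqrt (mul_le_mul_of_nonneg_left hy (hf0 x))).trans
      (sqrt_mul_le_midpoint hflc hf0 x y)
  have hvol : volume.real ((2⁻¹ : ℝ) • x +ᵥ (2⁻¹ : ℝ) • {y | c ≤ f y})
      = (2⁻¹ : ℝ) ^ d * volume.real {y | c ≤ f y} := by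
    simp [measureReal_def, Measure.addHaar_smul]
  calc s * ((2⁻¹ : ℝ) ^ d * volume.real {y | c ≤ f y})
      ≤ s * volume.real {z | s ≤ f z} := by
        rw [← hvol]
        gcongr
        exact (hfi.measure_ge_lt_top hs).ne
    _ ≤ ∫ y, f y := mul_meas_ge_le_integral_of_nonneg (.of_forall hf0) hfi s

theorem exists_forall_le (hflc : LogConcaveFunE f) (hf0 : ∀ x, 0 ≤ f x)
    (hfi : Integrable f) (hpos : 0 < ∫ x, f x) : ∃ C, ∀ x, f x ≤ C := by
  obtain ⟨c, hc, hK⟩ := exists_pos_measure_setOf_le_of_integral_pos hf0 hfi hpos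
  set m := (2⁻¹ : ℝ) ^ d * volume.real {y | c ≤ f y}
  have hm : 0 < m := mul_pos (by positivity)
    (ENNReal.toReal_pos hK.ne' (hfi.measure_ge_lt_top hc).ne)
  refine ⟨((∫ y, f y) / m) ^ 2 / c, fun x => ?_⟩
  rw [le_div_iff₀ hc, ← Real.sqrt_le_left (div_pos hpos hm).le]
  exact (le_div_iff₀ hm).2 (sqrt_mul_mul_measureReal_le_integral hflc hf0 hfi x c)

end LogConcaveFunE

theorem MeasureTheory.Integrable.memLp_two_of_norm_le {α : Type*} [MeasurableSpace α]
    {μ : Measure α} {f : α → ℝ} {C : ℝ} (hfi : Integrable f μ) (hC : ∀ᵐ x ∂μ, ‖f x‖ ≤ C) :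
    MemLp f 2 μ :=
  (memLp_two_iff_integrable_sq hfi.aestronglyMeasurable).2 <| by
    simpa only [sq] using hfi.bdd_mul hfi.aestronglyMeasurable hC

noncomputable def autocorrelation {G : Type*} [AddGroup G] [MeasurableSpace G] (μ : Measure G)
    (f : G → ℝ) (x : G) : ℝ :=
  ∫ t, f t * f (t - x) ∂μ

section Autocorrelation

variable {G : Type*} [AddGroup G] [TopologicalSpace G] [IsTopologicalAddGroup G]
  [MeasurableSpace G] [BorelSpace G] {μ : Measure G} [μ.IsAddRightInvariant]
  [μ.InnerRegularCompactLTTop] [IsLocallyFiniteMeasure μ] {f : G → ℝ}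

theorem MeasureTheory.MemLp.exists_continuous_translate {p : ℝ≥0∞} [Fact (1 ≤ p)] (hp : p ≠ ∞)
    (hf : MemLp f p μ) :
    ∃ T : G → Lp ℝ p μ, Continuous T ∧ (∀ x, ‖T x‖ = ‖T 0‖) ∧
      ∀ x, T x =ᵐ[μ] fun t => f (t - x) := by
  let subRight : G → C(G, G) := fun x => ⟨fun t => t - x, by fun_prop⟩
  have hmp (x : G) : MeasurePreserving (subRight x) μ μ := measurePreserving_sub_right μ x
  refine ⟨fun x => Lp.compMeasurePreserving (subRight x) (hmp x) (hf.toLp f),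
    continuous_const.compMeasurePreservingLp
      (ContinuousMap.continuous_of_continuous_uncurry _ (continuous_snd.sub continuous_fst)) hmp hp,
    fun x => by simp only [Lp.norm_compMeasurePreserving], fun x => ?_⟩
  exact (Lp.coeFn_compMeasurePreserving _ (hmp x)).trans
    ((hmp x).quasiMeasurePreserving.ae_eq hf.coeFn_toLp)

theorem MeasureTheory.MemLp.exists_autocorrelation_eq_inner (hf : MemLp f 2 μ) :
    ∃ T : G → Lp ℝ 2 μ, Continuous T ∧ (∀ x, ‖T x‖ = ‖T 0‖) ∧
      ∀ x, autocorrelation μ f x = inner ℝ (T 0) (T x) := by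
  obtain ⟨T, hTc, hTn, hT⟩ := hf.exists_continuous_translate ENNReal.ofNat_ne_top
  refine ⟨T, hTc, hTn, fun x => ?_⟩
  rw [L2.inner_def]
  refine integral_congr_ae ?_
  filter_upwards [hT 0, hT x] with t h0 hx
  simp [h0, hx, mul_comm]

theorem MeasureTheory.MemLp.continuous_autocorrelation (hf : MemLp f 2 μ) :
    Continuous (autocorrelation μ f) := by
  obtain ⟨T, hTc, -, hT⟩ := hf.exists_autocorrelation_eq_inner
  simpa only [funext hT] using continuous_const.inner hTc

theorem MeasureTheory.MemLp.autocorrelation_le_autocorrelation_zero (hf : MemLp f 2 μ) (x : G) :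
    autocorrelation μ f x ≤ autocorrelation μ f 0 := by
  obtain ⟨T, -, hTn, hT⟩ := hf.exists_autocorrelation_eq_inner
  rw [hT, hT, real_inner_self_eq_norm_mul_norm]
  exact (real_inner_le_norm _ _).trans_eq (by rw [hTn x])

end Autocorrelation

theorem hinf_diff_eq_h2_general (d : ℕ) (f : EuclideanSpace ℝ (Fin d) → ℝ)
    (hf0 : ∀ x, 0 ≤ f x) (hf1 : ∫ x, f x = 1)
    (hflc : LogConcaveFunE f) :
    essSupNNE (convE f (fun x => f (-x))) = ENNReal.ofReal (∫ x, (f x) ^ 2) := by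
  have hfi : Integrable f := .of_integral_ne_zero (hf1 ▸ one_ne_zero)
  obtain ⟨C, hC⟩ := hflc.exists_forall_le hf0 hfi (hf1 ▸ one_pos)
  have hf2 : MemLp f 2 volume :=
    hfi.memLp_two_of_norm_le (.of_forall fun x => (Real.norm_of_nonneg (hf0 x)).trans_le (hC x))
  have hconv : convE f (fun x => f (-x)) = autocorrelation volume f := by
    funext x
    simp only [convE, autocorrelation, neg_sub]
  have hsq : ∫ x, f x ^ 2 = autocorrelation volume f 0 := by
    simp only [autocorrelation, sub_zero, sq]
  rw [hconv, hsq]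
  exact essSup_eq_of_continuousAt_of_forall_le
    (ENNReal.continuous_ofReal.comp hf2.continuous_autocorrelation).continuousAt
    fun x => ENNReal.ofReal_le_ofReal (hf2.autocorrelation_le_autocorrelation_zero x)

/-- If `U, V` are i.i.d. with a log-concave density `f` on `ℝ^d`, then
`h_∞(U - V) = h₂(U)`: the essential supremum of the density `f ⋆ f̌` of `U - V`
equals `∫ f²`. -/
theorem hinf_diff_eq_h2 (d : ℕ) (f : EuclideanSpace ℝ (Fin d) → ℝ)
    (hf0 : ∀ x, 0 ≤ f x) (hfm : Measurable f) (hf1 : ∫ x, f x = 1)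
    (hflc : LogConcaveFunE f) :
    essSupNNE (convE f (fun x => f (-x))) = ENNReal.ofReal (∫ x, (f x) ^ 2) :=
  hinf_diff_eq_h2_general d f hf0 hf1 hflc
end

section
/- Let A, B ⊆ ℝ be Borel measurable sets of finite Lebesgue measure. Then A↓ + B↓ ⊆ (A+B)↓, where + denotes Minkowski sum; that is, [0, |A|) + [0, |B|) ⊆ [0, |A+B|). -/
open MeasureTheory ENNReal Pointwise

/-- Decreasing rearrangement of a set `A ⊆ ℝ`: the interval `[0, |A|)`
(all of `[0, ∞)` if `A` has infinite measure). -/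
def setRearr (A : Set ℝ) : Set ℝ := {x | 0 ≤ x ∧ ENNReal.ofReal x < volume A}

lemma compact_add_measure (K L : Set ℝ) (hK : IsCompact K) (hL : IsCompact L)
    (hKne : K.Nonempty) (hLne : L.Nonempty) :
    volume K + volume L ≤ volume (K + L) := by
  set a := sSup K with ha
  set b := sInf L with hb
  have haK : a ∈ K := hK.sSup_mem hKne
  have hbL : b ∈ L := hL.sInf_mem hLne
  set S₁ : Set ℝ := a +ᵥ L with hS₁
  set S₂ : Set ℝ := (b +ᵥ K) \ {a + b} with hS₂
  have h₁sub : S₁ ⊆ K + L := by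
    rintro x ⟨l, hl, rfl⟩
    exact Set.add_mem_add haK hl
  have h₂sub : S₂ ⊆ K + L := by
    rintro x ⟨⟨k, hk, rfl⟩, _⟩
    show b + k ∈ K + L
    rw [add_comm b k]
    exact Set.add_mem_add hk hbL

  have hdisj : Disjoint S₁ S₂ := by
    rw [Set.disjoint_left]
    rintro x ⟨l, hl, rfl⟩ ⟨⟨k, hk, hkx⟩, hne⟩
    apply hne
    have h1 : b ≤ l := csInf_le hL.bddBelow hl
    have h2 : k ≤ a := le_csSup hK.bddAbove hk
    have h3 : a +ᵥ l = b +ᵥ k := hkx.symm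
    simp only [vadd_eq_add] at h3 ⊢
    have : a + l = a + b := by linarith
    simpa using this
  have hmeas₂ : MeasurableSet S₂ :=
    ((hK.vadd b).isClosed.measurableSet).diff (measurableSet_singleton _)
  have hv₁ : volume S₁ = volume L := by
    rw [hS₁, measure_vadd]
  have hv₂ : volume S₂ = volume K := by
    rw [hS₂, measure_diff_null (measure_singleton _), measure_vadd]
  calc volume K + volume L = volume S₁ + volume S₂ := by rw [hv₁, hv₂, add_comm]
    _ = volume (S₁ ∪ S₂) := (measure_union hdisj hmeas₂).symm
    _ ≤ volume (K + L) := measure_mono (Set.union_subset h₁sub h₂sub)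

/-- For Borel sets `A, B ⊆ ℝ` of finite Lebesgue measure,
`A↓ + B↓ ⊆ (A + B)↓`, i.e. `[0,|A|) + [0,|B|) ⊆ [0,|A+B|)`. -/
theorem setRearr_add_subset (A B : Set ℝ) (hA : MeasurableSet A) (hB : MeasurableSet B)
    (hAfin : volume A < ⊤) (hBfin : volume B < ⊤) :
    setRearr A + setRearr B ⊆ setRearr (A + B) := by
  rintro z ⟨x, ⟨hx0, hxA⟩, y, ⟨hy0, hyB⟩, rfl⟩
  obtain ⟨K, hKA, hKc, hxK⟩ := hA.exists_lt_isCompact_of_ne_top hAfin.ne hxA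
  obtain ⟨L, hLB, hLc, hyL⟩ := hB.exists_lt_isCompact_of_ne_top hBfin.ne hyB
  have hKne : K.Nonempty := nonempty_of_measure_ne_zero (pos_of_gt hxK).ne'
  have hLne : L.Nonempty := nonempty_of_measure_ne_zero (pos_of_gt hyL).ne'
  refine ⟨by positivity, ?_⟩
  calc ENNReal.ofReal (x + y) = ENNReal.ofReal x + ENNReal.ofReal y :=
        ENNReal.ofReal_add hx0 hy0
    _ < volume K + volume L := ENNReal.add_lt_add hxK hyL
    _ ≤ volume (K + L) := compact_add_measure K L hKc hLc hKne hLne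
    _ ≤ volume (A + B) := measure_mono (Set.add_subset_add hKA hLB)
end

section
/- Let f : ℝ → ℝ ∪ {±∞} be a Borel measurable function vanishing at infinity (every super-level set has finite Lebesgue measure). If f is concave on its effective domain then its decreasing rearrangement f↓ is concave on its effective domain; consequently, if f is log-concave then f↓ is log-concave. -/
/-!
Write `A↓ = [0, |A|)`. For concave `f` the level sets satisfy
`(1 - t){f > λ₀} + t{f > λ₁} ⊆ {f > (1 - t)λ₀ + tλ₁}`, and the one-dimensional
Brunn–Minkowski inequality `|A| + |B| ≤ |A + B|` carries this inclusion over to the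
intervals `A↓`, which is the concavity of `f↓`. For log-concave `f` the same argument runs
with the geometric mean `λ₀ ^ (1 - t) λ₁ ^ t` in place of the arithmetic one.
Brunn–Minkowski on the line: for compact `K, L`, the translates `K + min L` and `max K + L`
lie in `K + L` and meet in a single point.
-/

open MeasureTheory ENNReal

/-- Decreasing rearrangement of `f : ℝ → ℝ ∪ {±∞}`:
`f↓(x) = sup {λ ∈ ℝ : x ∈ {f > λ}↓}`. -/
noncomputable def decRearr (f : ℝ → EReal) : ℝ → EReal :=
  fun x => sSup ((fun l : ℝ => (l : EReal)) ''
    {l : ℝ | x ∈ setRearr {y | (l : EReal) < f y}})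

/-- Decreasing rearrangement of a nonnegative real function:
`f↓(x) = sup {λ : x ∈ {f > λ}↓}`. -/
noncomputable def decRearrNN (f : ℝ → ℝ) : ℝ → ℝ :=
  fun x => sSup {l : ℝ | x ∈ setRearr {y | l < f y}}

/-- Concavity of an `ℝ ∪ {±∞}`-valued function on its effective domain, expressed via
the set-theoretic characterization: for all `λ₀, λ₁ ∈ ℝ` and `t ∈ [0,1]`,
`(1-t){f > λ₀} + t{f > λ₁} ⊆ {f > (1-t)λ₀ + tλ₁}`. -/
def ConcaveLevels (f : ℝ → EReal) : Prop :=
  ∀ (l₀ l₁ t : ℝ), 0 ≤ t → t ≤ 1 → ∀ x y : ℝ,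
    (l₀ : EReal) < f x → (l₁ : EReal) < f y →
      (((1 - t) * l₀ + t * l₁ : ℝ) : EReal) < f ((1 - t) * x + t * y)

/-- A nonnegative function on `ℝ` is log-concave iff
`f((1-t)x + ty) ≥ f(x)^{1-t} f(y)^t` for all `x, y` and `t ∈ [0,1]`
(equivalently `f = e^{-V}` with `V : ℝ → ℝ ∪ {∞}` convex). -/
def LogConcaveFun (f : ℝ → ℝ) : Prop :=
  ∀ x y t : ℝ, 0 ≤ t → t ≤ 1 → f x ^ (1 - t) * f y ^ t ≤ f ((1 - t) * x + t * y)

open Set Pointwise Filter Topology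

theorem le_of_forall_pos_lt_one_mul_le {a b : ℝ}
    (h : ∀ θ : ℝ, 0 < θ → θ < 1 → θ * a ≤ b) : a ≤ b := by
  have hlim : Tendsto (fun θ : ℝ => θ * a) (𝓝[<] 1) (𝓝 a) := by
    simpa using ((continuous_mul_const a).tendsto 1).mono_left nhdsWithin_le_nhds
  refine le_of_tendsto hlim ?_
  filter_upwards [Ioo_mem_nhdsLT one_pos] with θ hθ using h θ hθ.1 hθ.2

theorem IsCompact.volume_add_volume_le_volume_add {K L : Set ℝ} (hK : IsCompact K)
    (hL : IsCompact L) (hK₀ : K.Nonempty) (hL₀ : L.Nonempty) :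
    volume K + volume L ≤ volume (K + L) := by
  set a := sSup K
  set b := sInf L
  have hK' : b +ᵥ K ⊆ K + L := by
    rintro _ ⟨k, hk, rfl⟩
    change b + k ∈ K + L
    rw [add_comm b k]
    exact add_mem_add hk (hL.sInf_mem hL₀)
  have hL' : a +ᵥ L ⊆ K + L := by
    rintro _ ⟨l, hl, rfl⟩
    exact add_mem_add (hK.sSup_mem hK₀) hl
  have hinter : (b +ᵥ K) ∩ (a +ᵥ L) ⊆ {a + b} := by
    rintro _ ⟨⟨k, hk, rfl⟩, ⟨l, hl, hkl⟩⟩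
    have hka : k ≤ a := le_csSup hK.bddAbove hk
    have hbl : b ≤ l := csInf_le hL.bddBelow hl
    change a + l = b + k at hkl
    change b + k = a + b
    linarith
  calc volume K + volume L = volume (b +ᵥ K) + volume (a +ᵥ L) := by
        rw [measure_vadd, measure_vadd]
    _ = volume ((b +ᵥ K) ∪ (a +ᵥ L)) := by
        rw [← measure_union_add_inter _ (hL.measurableSet.const_vadd a),
          measure_mono_null hinter (measure_singleton _), add_zero]
    _ ≤ volume (K + L) := measure_mono (union_subset hK' hL')

theorem MeasurableSet.lt_volume_add {A B : Set ℝ} (hA : MeasurableSet A) (hB : MeasurableSet B)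
    {a b : ℝ≥0∞} (ha : a < volume A) (hb : b < volume B) : a + b < volume (A + B) := by
  obtain ⟨K, hKA, hK, haK⟩ := hA.exists_lt_isCompact ha
  obtain ⟨L, hLB, hL, hbL⟩ := hB.exists_lt_isCompact hb
  calc a + b < volume K + volume L := ENNReal.add_lt_add haK hbL
    _ ≤ volume (K + L) := hK.volume_add_volume_le_volume_add hL
        (nonempty_of_measure_ne_zero (ne_bot_of_gt haK))
        (nonempty_of_measure_ne_zero (ne_bot_of_gt hbL))
    _ ≤ volume (A + B) := measure_mono (add_subset_add hKA hLB)

section setRearr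

variable {A B C : Set ℝ} {x y : ℝ}

theorem setRearr_mono (h : A ⊆ B) : setRearr A ⊆ setRearr B :=
  fun _ hx => ⟨hx.1, hx.2.trans_le (measure_mono h)⟩

theorem nonempty_of_mem_setRearr (hx : x ∈ setRearr A) : A.Nonempty :=
  nonempty_of_measure_ne_zero (ne_bot_of_gt hx.2)

theorem smul_mem_setRearr_smul {c : ℝ} (hc : 0 < c) (hx : x ∈ setRearr A) :
    c * x ∈ setRearr (c • A) := by
  refine ⟨mul_nonneg hc.le hx.1, ?_⟩
  rw [Measure.addHaar_smul_of_nonneg _ hc.le, Module.finrank_self, pow_one,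
    ENNReal.ofReal_mul hc.le]
  exact ENNReal.mul_lt_mul_right (ofReal_pos.2 hc).ne' ofReal_ne_top hx.2

theorem add_mem_setRearr_add (hA : MeasurableSet A) (hB : MeasurableSet B)
    (hx : x ∈ setRearr A) (hy : y ∈ setRearr B) : x + y ∈ setRearr (A + B) := by
  refine ⟨add_nonneg hx.1 hy.1, ?_⟩
  rw [ENNReal.ofReal_add hx.1 hy.1]
  exact hA.lt_volume_add hB hx.2 hy.2

theorem convexCombo_mem_setRearr (hA : MeasurableSet A) (hB : MeasurableSet B) {t : ℝ}
    (ht₀ : 0 ≤ t) (ht₁ : t ≤ 1) (hC : ∀ a ∈ A, ∀ b ∈ B, (1 - t) * a + t * b ∈ C)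
    (hx : x ∈ setRearr A) (hy : y ∈ setRearr B) : (1 - t) * x + t * y ∈ setRearr C := by
  rcases ht₀.eq_or_lt with rfl | ht₀
  · obtain ⟨b, hb⟩ := nonempty_of_mem_setRearr hy
    simpa using setRearr_mono (fun a ha => by simpa using hC a ha b hb) hx
  rcases ht₁.eq_or_lt with rfl | ht₁
  · obtain ⟨a, ha⟩ := nonempty_of_mem_setRearr hx
    simpa using setRearr_mono (fun b hb => by simpa using hC a ha b hb) hy
  refine setRearr_mono ?_ <| add_mem_setRearr_add (hA.const_smul₀ _) (hB.const_smul₀ _)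
    (smul_mem_setRearr_smul (sub_pos.2 ht₁) hx) (smul_mem_setRearr_smul ht₀ hy)
  rintro _ ⟨_, ⟨a, ha, rfl⟩, _, ⟨b, hb, rfl⟩, rfl⟩
  exact hC a ha b hb

end setRearr

section decRearr

variable {f : ℝ → EReal} {x : ℝ}

theorem coe_lt_decRearr_iff {l : ℝ} :
    (l : EReal) < decRearr f x ↔ ∃ l', l < l' ∧ x ∈ setRearr {y | (l' : EReal) < f y} := by
  simp only [decRearr, lt_sSup_iff, mem_image, mem_ofPred_eq]
  constructor
  · rintro ⟨_, ⟨l', hl', rfl⟩, hl⟩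
    exact ⟨l', EReal.coe_lt_coe_iff.1 hl, hl'⟩
  · rintro ⟨l', hl, hl'⟩
    exact ⟨l', ⟨l', hl', rfl⟩, EReal.coe_lt_coe_iff.2 hl⟩

theorem coe_le_decRearr {l : ℝ} (h : x ∈ setRearr {y | (l : EReal) < f y}) :
    (l : EReal) ≤ decRearr f x :=
  le_sSup ⟨l, h, rfl⟩

theorem ConcaveLevels.decRearr (hf : Measurable f) (hc : ConcaveLevels f) :
    ConcaveLevels (decRearr f) := by
  intro l₀ l₁ t ht₀ ht₁ x y hx hy
  obtain ⟨l₀', hl₀, hx'⟩ := coe_lt_decRearr_iff.1 hx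
  obtain ⟨l₁', hl₁, hy'⟩ := coe_lt_decRearr_iff.1 hy
  have hz := convexCombo_mem_setRearr
    (C := {w | (((1 - t) * l₀' + t * l₁' : ℝ) : EReal) < f w})
    (hf measurableSet_Ioi) (hf measurableSet_Ioi) ht₀ ht₁
    (fun a ha b hb => hc l₀' l₁' t ht₀ ht₁ a b ha hb) hx' hy'
  refine lt_of_lt_of_le (EReal.coe_lt_coe_iff.2 ?_) (coe_le_decRearr hz)
  nlinarith [mul_nonneg ht₀ (sub_pos.2 hl₁).le,
    mul_nonneg (sub_nonneg.2 ht₁) (sub_pos.2 hl₀).le]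

end decRearr

section decRearrNN

variable {f : ℝ → ℝ} {x : ℝ}

theorem le_decRearrNN {l : ℝ} (hbdd : BddAbove {l | x ∈ setRearr {y | l < f y}})
    (h : x ∈ setRearr {y | l < f y}) : l ≤ decRearrNN f x :=
  le_csSup hbdd h

theorem bddAbove_of_decRearrNN_pos (h : 0 < decRearrNN f x) :
    BddAbove {l | x ∈ setRearr {y | l < f y}} := by
  by_contra hbdd
  exact h.ne' (Real.sSup_of_not_bddAbove hbdd)

theorem mem_setRearr_of_lt_decRearrNN {l : ℝ} (hpos : 0 < decRearrNN f x)
    (hl : l < decRearrNN f x) : x ∈ setRearr {y | l < f y} := by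
  have hne : {l | x ∈ setRearr {y | l < f y}}.Nonempty := by
    by_contra hne
    exact hpos.ne' (by simp [decRearrNN, not_nonempty_iff_eq_empty.1 hne])
  obtain ⟨l', hl', hll'⟩ := exists_lt_of_lt_csSup hne hl
  exact setRearr_mono (fun y (hy : l' < f y) => hll'.trans hy) hl'

theorem decRearrNN_nonneg (hf : ∀ y, 0 ≤ f y) (hx : 0 ≤ x) : 0 ≤ decRearrNN f x := by
  by_cases hbdd : BddAbove {l | x ∈ setRearr {y | l < f y}}
  · have hneg : ∀ l < 0, x ∈ setRearr {y | l < f y} := fun l hl => by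
      refine ⟨hx, ?_⟩
      rw [show {y | l < f y} = univ from eq_univ_of_forall fun y => hl.trans_le (hf y),
        Real.volume_univ]
      exact ofReal_lt_top
    exact le_of_forall_lt fun c hc =>
      (by linarith : c < c / 2).trans_le (le_decRearrNN hbdd (hneg _ (by linarith)))
  · exact (Real.sSup_of_not_bddAbove hbdd).ge

theorem bddAbove_setOf_mem_setRearr (hf : Measurable f)
    (hfin : ∃ l, volume {y | l < f y} ≠ ⊤) (hx : 0 < x) :
    BddAbove {l | x ∈ setRearr {y | l < f y}} := by
  have hanti : Antitone fun l : ℝ => {y | l < f y} := fun l l' h y hy => h.trans_lt hy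
  have hempty : ⋂ l : ℝ, {y | l < f y} = ∅ :=
    eq_empty_of_forall_notMem fun y hy => lt_irrefl (f y) (mem_iInter.1 hy (f y))
  have htend := tendsto_measure_iInter_atTop (s := fun l : ℝ => {y | l < f y})
    (fun _ => (hf measurableSet_Ioi).nullMeasurableSet) hanti hfin
  rw [hempty, measure_empty] at htend
  obtain ⟨L, hL⟩ := eventually_atTop.1 (htend.eventually_lt_const (ofReal_pos.2 hx))
  exact ⟨L, fun l hl => le_of_not_gt fun hLl => (hL l hLl.le).not_gt hl.2⟩

end decRearrNN

theorem LogConcaveFun.rpow_mul_rpow_lt {f : ℝ → ℝ} (hf : LogConcaveFun f)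
    {t l₀ l₁ x y : ℝ} (ht₀ : 0 < t) (ht₁ : t < 1) (hl₀ : 0 ≤ l₀) (hl₁ : 0 ≤ l₁)
    (hx : l₀ < f x) (hy : l₁ < f y) :
    l₀ ^ (1 - t) * l₁ ^ t < f ((1 - t) * x + t * y) :=
  calc l₀ ^ (1 - t) * l₁ ^ t < f x ^ (1 - t) * f y ^ t :=
        mul_lt_mul'' (Real.rpow_lt_rpow hl₀ hx (sub_pos.2 ht₁)) (Real.rpow_lt_rpow hl₁ hy ht₀)
          (Real.rpow_nonneg hl₀ _) (Real.rpow_nonneg hl₁ _)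
    _ ≤ f ((1 - t) * x + t * y) := hf x y t ht₀.le ht₁.le

theorem LogConcaveFun.rpow_mul_rpow_decRearrNN_le {f : ℝ → ℝ} (hlc : LogConcaveFun f)
    (hf : Measurable f) (hf₀ : ∀ y, 0 ≤ f y) (hfin : ∃ l, volume {y | l < f y} ≠ ⊤)
    {x y t : ℝ} (hx : 0 ≤ x) (hy : 0 ≤ y) (ht₀ : 0 ≤ t) (ht₁ : t ≤ 1) :
    decRearrNN f x ^ (1 - t) * decRearrNN f y ^ t ≤ decRearrNN f ((1 - t) * x + t * y) := by
  rcases ht₀.eq_or_lt with rfl | ht₀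
  · simp
  rcases ht₁.eq_or_lt with rfl | ht₁
  · simp
  have hz : 0 ≤ (1 - t) * x + t * y := by nlinarith
  rcases (decRearrNN_nonneg hf₀ hx).eq_or_lt with ha | ha
  · rw [← ha, Real.zero_rpow (by linarith), zero_mul]
    exact decRearrNN_nonneg hf₀ hz
  rcases (decRearrNN_nonneg hf₀ hy).eq_or_lt with hb | hb
  · rw [← hb, Real.zero_rpow ht₀.ne', mul_zero]
    exact decRearrNN_nonneg hf₀ hz
  have hbdd : BddAbove {l | (1 - t) * x + t * y ∈ setRearr {w | l < f w}} := by
    rcases hz.eq_or_lt with hz | hz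
    · obtain rfl : x = 0 := by nlinarith
      obtain rfl : y = 0 := by nlinarith
      simpa using bddAbove_of_decRearrNN_pos ha
    · exact bddAbove_setOf_mem_setRearr hf hfin hz
  refine le_of_forall_pos_lt_one_mul_le fun θ hθ₀ hθ₁ => ?_
  calc θ * (decRearrNN f x ^ (1 - t) * decRearrNN f y ^ t)
      = (θ * decRearrNN f x) ^ (1 - t) * (θ * decRearrNN f y) ^ t := by
        rw [Real.mul_rpow hθ₀.le ha.le, Real.mul_rpow hθ₀.le hb.le, mul_mul_mul_comm,
          ← Real.rpow_add hθ₀, sub_add_cancel, Real.rpow_one]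
    _ ≤ decRearrNN f ((1 - t) * x + t * y) :=
        le_decRearrNN hbdd <| convexCombo_mem_setRearr (hf measurableSet_Ioi)
          (hf measurableSet_Ioi) ht₀.le ht₁.le
          (fun _ ha' _ hb' =>
            hlc.rpow_mul_rpow_lt ht₀ ht₁ (by positivity) (by positivity) ha' hb')
          (mem_setRearr_of_lt_decRearrNN ha (mul_lt_of_lt_one_left ha hθ₁))
          (mem_setRearr_of_lt_decRearrNN hb (mul_lt_of_lt_one_left hb hθ₁))

/-- If a Borel function `f : ℝ → ℝ ∪ {±∞}` vanishing at infinity is concave on its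
effective domain, then so is its decreasing rearrangement `f↓`; consequently, if a
nonnegative `f` is log-concave then `f↓` is log-concave (on `[0,∞)`). -/
theorem decRearr_concave_and_logConcave :
    (∀ f : ℝ → EReal, Measurable f →
      (∀ c : ℝ, volume {x | (c : EReal) < f x} < ⊤) →
      ConcaveLevels f → ConcaveLevels (decRearr f)) ∧
    (∀ f : ℝ → ℝ, Measurable f → (∀ x, 0 ≤ f x) →
      (∀ l : ℝ, 0 < l → volume {y | l < f y} < ⊤) →
      LogConcaveFun f →
      ∀ x y t : ℝ, 0 ≤ x → 0 ≤ y → 0 ≤ t → t ≤ 1 →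
        decRearrNN f x ^ (1 - t) * decRearrNN f y ^ t ≤
          decRearrNN f ((1 - t) * x + t * y)) :=
  ⟨fun _ hf _ hc => hc.decRearr hf,
    fun _ hf hf₀ hfin hlc _ _ _ hx hy ht₀ ht₁ =>
      hlc.rpow_mul_rpow_decRearrNN_le hf hf₀ ⟨1, (hfin 1 one_pos).ne⟩ hx hy ht₀ ht₁⟩
end

section
/- Let f, g : ℝ → ℝ₊ be integrable functions with ∫ f = ∫ g. Suppose that for every Borel measurable set A of finite Lebesgue measure there exists a Borel measurable set B with |B| = |A| such that ∫_A f(x) dx ≤ ∫_B g(x) dx. Then f is majorized by g, i.e., ∫_ℝ (f(x) - t)₊ dx ≤ ∫_ℝ (g(x) - t)₊ dx for all t ≥ 0. -/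
/-!
For `t > 0` the superlevel set `A = {t < f}` has finite measure and
`∫ (f - t)₊ = ∫_A f - t |A|`, while for every set `B` of finite measure
`∫_B g - t |B| ≤ ∫_B (g - t)₊ ≤ ∫ (g - t)₊`. The set `B` supplied by the hypothesis for this `A`
links the two. The case `t = 0` is the equality of the total integrals.
-/

open MeasureTheory ENNReal

section PositivePartIntegral

variable {α : Type*} [MeasurableSpace α] {μ : Measure α} {f : α → ℝ} {t : ℝ}

theorem MeasureTheory.Integrable.max_sub_const (hf : Integrable f μ) (ht : 0 ≤ t) :
    Integrable (fun x => max (f x - t) 0) μ := by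
  refine hf.pos_part.mono ((hf.1.sub aestronglyMeasurable_const).sup aestronglyMeasurable_const)
    (Filter.Eventually.of_forall fun x => ?_)
  rw [Real.norm_of_nonneg (le_max_right _ _), Real.norm_of_nonneg (le_max_right _ _)]
  exact max_le_max_right 0 (by linarith)

theorem setIntegral_sub_mul_measureReal_le_integral_max_sub {B : Set α}
    (hf : Integrable f μ) (ht : 0 ≤ t) (hB : μ B ≠ ∞) :
    ∫ x in B, f x ∂μ - t * μ.real B ≤ ∫ x, max (f x - t) 0 ∂μ := by
  have hint := hf.max_sub_const ht
  calc ∫ x in B, f x ∂μ - t * μ.real B = ∫ x in B, (f x - t) ∂μ := by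
        rw [integral_sub hf.integrableOn (integrableOn_const hB), setIntegral_const, smul_eq_mul,
          mul_comm]
    _ ≤ ∫ x in B, max (f x - t) 0 ∂μ :=
        setIntegral_mono (hf.integrableOn.sub (integrableOn_const hB)) hint.integrableOn
          fun x => le_max_left _ _
    _ ≤ ∫ x, max (f x - t) 0 ∂μ :=
        setIntegral_le_integral hint (Filter.Eventually.of_forall fun x => le_max_right _ _)

theorem integral_max_sub_eq_setIntegral_superlevel (hfm : Measurable f) (hf : Integrable f μ)
    (ht : 0 < t) :
    ∫ x, max (f x - t) 0 ∂μ = ∫ x in {x | t < f x}, f x ∂μ - t * μ.real {x | t < f x} := by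
  have hA : MeasurableSet {x | t < f x} := measurableSet_lt measurable_const hfm
  have hAfin : μ {x | t < f x} ≠ ∞ := (hf.measure_gt_lt_top ht).ne
  have hind : (fun x => max (f x - t) 0) = {x | t < f x}.indicator (fun x => f x - t) := by
    funext x
    by_cases hx : t < f x
    · rw [Set.indicator_of_mem (s := {x | t < f x}) hx, max_eq_left (by linarith)]
    · rw [Set.indicator_of_notMem (s := {x | t < f x}) hx, max_eq_right (by linarith)]
  rw [hind, integral_indicator hA, integral_sub hf.integrableOn (integrableOn_const hAfin),
    setIntegral_const, smul_eq_mul, mul_comm]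

end PositivePartIntegral

/-- Sufficient condition for majorization: if for every Borel set `A` of finite measure
there is a Borel set `B` of equal measure with `∫_A f ≤ ∫_B g`, then
`∫ (f - t)₊ ≤ ∫ (g - t)₊` for all `t ≥ 0`, i.e. `f` is majorized by `g`. -/
theorem majorization_sufficient (f g : ℝ → ℝ)
    (hf0 : ∀ x, 0 ≤ f x) (hg0 : ∀ x, 0 ≤ g x)
    (hfi : Integrable f) (hgi : Integrable g)
    (heq : ∫ x, f x = ∫ x, g x)
    (h : ∀ A : Set ℝ, MeasurableSet A → volume A < ⊤ →
      ∃ B : Set ℝ, MeasurableSet B ∧ volume B = volume A ∧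
        ∫ x in A, f x ≤ ∫ x in B, g x) :
    ∀ t : ℝ, 0 ≤ t → ∫ x, max (f x - t) 0 ≤ ∫ x, max (g x - t) 0 := by
  intro t ht
  rcases ht.eq_or_lt with rfl | ht
  · simp only [sub_zero, max_eq_left (hf0 _), max_eq_left (hg0 _), heq, le_refl]
  set f' := hfi.aemeasurable.mk f
  have hf'm : Measurable f' := hfi.aemeasurable.measurable_mk
  have hff' : f =ᵐ[volume] f' := hfi.aemeasurable.ae_eq_mk
  set A := {x | t < f' x}
  have hAfin : volume A < ⊤ := (hfi.congr hff').measure_gt_lt_top ht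
  obtain ⟨B, -, hBA, hAB⟩ := h A (measurableSet_lt measurable_const hf'm) hAfin
  calc ∫ x, max (f x - t) 0 = ∫ x, max (f' x - t) 0 :=
        integral_congr_ae (hff'.mono fun x hx => by simp only [hx])
    _ = (∫ x in A, f x) - t * volume.real A := by
        rw [integral_max_sub_eq_setIntegral_superlevel hf'm (hfi.congr hff') ht,
          integral_congr_ae (ae_restrict_of_ae hff')]
    _ ≤ (∫ x in B, g x) - t * volume.real B := by
        rw [measureReal_def, measureReal_def, hBA]; linarith
    _ ≤ ∫ x, max (g x - t) 0 :=
        setIntegral_sub_mul_measureReal_le_integral_max_sub hgi ht.le (hBA ▸ hAfin).ne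
end

section
/- Let f : ℤ → [0,1] be a monotone log-concave probability mass function (non-increasing on its support, which may be taken to be contained in ℤ₊ = {0,1,2,...}). Then max_{k∈ℤ} (f ⋆ f)(k) > e^{-1} · max_{k∈ℤ} f(k), where (f ⋆ f)(k) = Σ_{j∈ℤ} f(j) f(k-j). Equivalently, for i.i.d. integer-valued random variables X, Y with pmf f, H_∞(X+Y) < H_∞(X) + 1. -/
/-!
Write `p n = f n`. For a non-increasing log-concave sequence the ratios `p (n + 1) / p n`
decrease, which gives `p 0 * p (i + j) ≤ p i * p j`; hence `(f ⋆ f) n ≥ (n + 1) * p 0 * p n`, and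
it suffices to find `n` with `(n + 1) * p n > e⁻¹`.

Let `m` be the first index at which `(n + 1) * p n` stops increasing. Decreasing ratios then put
`p` below the geometric sequence `p m * ρ ^ (k - m)` for some `ρ ∈ [m/(m+1), (m+1)/(m+2)]`, and
summing, `1 ≤ p m * ρ⁻ᵐ / (1 - ρ)`. On that interval `(1 - ρ) * ρ ^ m` is decreasing, so
`(m + 1) * p m ≥ (m + 1) * (1 - ρ) * ρ ^ m ≥ ((m + 1)/(m + 2)) ^ (m + 1) > e⁻¹`.
-/

open Real Finset

theorem exp_neg_one_lt_pow_succ_div (m : ℕ) : exp (-1) < ((m + 1) / (m + 2) : ℝ) ^ (m + 1) := by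
  have hx : (0 : ℝ) < 1 / (m + 1) := by positivity
  have hbase : exp (-(1 / (m + 1))) < (m + 1) / (m + 2) := by
    rw [exp_neg, inv_lt_comm₀ (exp_pos _) (by positivity), show ((m + 1) / (m + 2) : ℝ)⁻¹ = 1 / (m + 1) + 1 by field_simp; ring]
    exact add_one_lt_exp hx.ne'
  calc exp (-1) = exp (-(1 / (m + 1))) ^ (m + 1) := by
        rw [← exp_nat_mul]; congr 1; push_cast; field_simp
    _ < _ := pow_lt_pow_left₀ hbase (exp_pos _).le (Nat.succ_ne_zero m)

theorem antitoneOn_one_sub_mul_pow (m : ℕ) :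
    AntitoneOn (fun ρ : ℝ => (1 - ρ) * ρ ^ m) (Set.Icc (m / (m + 1)) 1) := by
  rintro ρ ⟨hρ, -⟩ σ ⟨-, hσ1⟩ hρσ
  rw [div_le_iff₀ (by positivity)] at hρ
  have hρ0 : 0 ≤ ρ := by nlinarith
  obtain rfl | hσ := (hρ0.trans hρσ).eq_or_lt
  · rw [le_antisymm hρσ hρ0]
  set t := ρ / σ with ht
  have hρt : ρ = t * σ := by rw [ht, div_mul_cancel₀ _ hσ.ne']
  have ht1 : t ≤ 1 := by rw [ht, div_le_one hσ]; exact hρσ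
  have hbern : 1 + m * (t - 1) ≤ t ^ m := by
    simpa using one_add_mul_le_pow (a := t - 1) (by nlinarith [div_nonneg hρ0 hσ.le]) m
  have hkey : (1 - σ) ≤ (1 - ρ) * (1 + m * (t - 1)) := by
    have h : 0 ≤ σ - m * (1 - ρ) := by nlinarith
    rw [hρt] at h ⊢
    linear_combination mul_nonneg (sub_nonneg.2 ht1) h
  show (1 - σ) * σ ^ m ≤ (1 - ρ) * ρ ^ m
  calc (1 - σ) * σ ^ m ≤ (1 - ρ) * (1 + m * (t - 1)) * σ ^ m := by gcongr
    _ ≤ (1 - ρ) * t ^ m * σ ^ m := by gcongr; linarith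
    _ = (1 - ρ) * ρ ^ m := by rw [hρt, mul_pow]; ring

section

variable {p : ℕ → ℝ} {ρ : ℝ} {m : ℕ}

theorem exp_neg_one_lt_succ_mul_one_sub_mul_pow
    (hρ : ρ ∈ Set.Icc ((m : ℝ) / (m + 1)) ((m + 1) / (m + 2))) :
    exp (-1) < (m + 1) * ((1 - ρ) * ρ ^ m) := by
  have hσ : ((m + 1) / (m + 2) : ℝ) ∈ Set.Icc ((m : ℝ) / (m + 1)) 1 :=
    ⟨hρ.1.trans hρ.2, div_le_one_of_le₀ (by linarith) (by positivity)⟩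
  calc exp (-1) < ((m + 1) / (m + 2) : ℝ) ^ (m + 1) := exp_neg_one_lt_pow_succ_div m
    _ = (m + 1) * ((1 - (m + 1) / (m + 2)) * ((m + 1) / (m + 2)) ^ m) := by
        rw [show (1 : ℝ) - (m + 1) / (m + 2) = 1 / (m + 2) by field_simp; ring, pow_succ]
        ring
    _ ≤ (m + 1) * ((1 - ρ) * ρ ^ m) :=
        mul_le_mul_of_nonneg_left
          (antitoneOn_one_sub_mul_pow m ⟨hρ.1, hρ.2.trans hσ.2⟩ hσ hρ.2) (by positivity)

theorem mul_pow_le_mul_pow_of_ratio (hρ : 0 ≤ ρ)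
    (hbefore : ∀ k < m, ρ * p k ≤ p (k + 1)) (hafter : ∀ k, m ≤ k → p (k + 1) ≤ ρ * p k)
    (k : ℕ) : p k * ρ ^ m ≤ p m * ρ ^ k := by
  rcases le_total k m with hkm | hmk
  · obtain ⟨d, rfl⟩ := Nat.exists_eq_add_of_le hkm
    have h := geom_le (u := fun i => p (k + i)) hρ d fun i hi => hbefore (k + i) (by omega)
    calc p k * ρ ^ (k + d) = ρ ^ d * p k * ρ ^ k := by ring
      _ ≤ p (k + d) * ρ ^ k := by gcongr; simpa using h
  · obtain ⟨d, rfl⟩ := Nat.exists_eq_add_of_le hmk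
    have h := le_geom (u := fun i => p (m + i)) hρ d fun i _ => hafter (m + i) (by omega)
    calc p (m + d) * ρ ^ m ≤ ρ ^ d * p m * ρ ^ m := by gcongr; simpa using h
      _ = p m * ρ ^ (m + d) := by ring

theorem one_sub_mul_pow_le_of_hasSum (hsum : HasSum p 1)
    (hρ0 : 0 ≤ ρ) (hρ1 : ρ < 1) (hdom : ∀ k, p k * ρ ^ m ≤ p m * ρ ^ k) :
    (1 - ρ) * ρ ^ m ≤ p m := by
  have h := hasSum_le hdom (hsum.mul_right (ρ ^ m))
    ((hasSum_geometric_of_lt_one hρ0 hρ1).mul_left (p m))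
  rw [one_mul, ← div_eq_mul_inv, le_div_iff₀ (by linarith)] at h
  linarith

theorem exists_first_descent_succ_mul (hp0 : ∀ n, 0 ≤ p n) (hsum : Summable p)
    (h0 : 0 < p 0) :
    ∃ m, 0 < p m ∧ ((m : ℝ) + 2) * p (m + 1) ≤ (m + 1) * p m ∧
      ∀ l < m, ((l : ℝ) + 1) * p l < (l + 2) * p (l + 1) := by
  have hex : ∃ m : ℕ, ((m : ℝ) + 2) * p (m + 1) ≤ (m + 1) * p m := by
    by_contra! hrise
    have hmono : Monotone fun n : ℕ => ((n : ℝ) + 1) * p n :=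
      monotone_nat_of_le_succ fun n => by push_cast; linarith [hrise n]
    refine Real.not_summable_natCast_inv ((summable_nat_add_iff 1).1 ?_)
    refine (hsum.div_const (p 0)).of_nonneg_of_le (fun n => by positivity) fun n => ?_
    rw [le_div_iff₀ h0]
    have := hmono (Nat.zero_le n)
    push_cast
    rw [inv_mul_le_iff₀ (by positivity)]
    simpa using this
  have hmin : ∀ l < Nat.find hex, ((l : ℝ) + 1) * p l < (l + 2) * p (l + 1) :=
    fun l hl => not_le.1 (Nat.find_min hex hl)
  refine ⟨Nat.find hex, ?_, Nat.find_spec hex, hmin⟩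
  generalize Nat.find hex = m at hmin ⊢
  cases m with
  | zero => exact h0
  | succ l =>
    have h := hmin l l.lt_succ_self
    nlinarith [mul_nonneg (show (0 : ℝ) ≤ l + 1 by positivity) (hp0 l)]

structure IsAntitoneLogConcave (p : ℕ → ℝ) : Prop where
  nonneg : ∀ n, 0 ≤ p n
  antitone : Antitone p
  mul_le_sq : ∀ n, p n * p (n + 2) ≤ p (n + 1) ^ 2

namespace IsAntitoneLogConcave

theorem mul_succ_le_mul_succ (hp : IsAntitoneLogConcave p) {i j : ℕ} (hij : i ≤ j) :
    p (j + 1) * p i ≤ p j * p (i + 1) := by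
  induction j, hij using Nat.le_induction with
  | base => rw [mul_comm]
  | succ j hij ih =>
    obtain hz | hpos := (hp.nonneg (j + 1)).eq_or_lt
    · have : p (j + 2) = 0 := le_antisymm (hz ▸ hp.antitone (by omega)) (hp.nonneg _)
      rw [this, zero_mul]
      exact mul_nonneg (hp.nonneg _) (hp.nonneg _)
    · have hpos' : 0 < p j := hpos.trans_le (hp.antitone (by omega))
      refine le_of_mul_le_mul_right ?_ (mul_pos hpos' hpos)
      calc p (j + 2) * p i * (p j * p (j + 1)) = (p j * p (j + 2)) * (p (j + 1) * p i) := by ring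
        _ ≤ p (j + 1) ^ 2 * (p j * p (i + 1)) :=
            mul_le_mul (hp.mul_le_sq j) ih (mul_nonneg (hp.nonneg _) (hp.nonneg _)) (sq_nonneg _)
        _ = p (j + 1) * p (i + 1) * (p j * p (j + 1)) := by ring

theorem mul_add_le_mul (hp : IsAntitoneLogConcave p) (i j : ℕ) :
    p 0 * p (i + j) ≤ p i * p j := by
  wlog hij : i ≤ j generalizing i j
  · simpa [add_comm, mul_comm] using this j i (by omega)
  induction i generalizing j with
  | zero => simp
  | succ i ih =>
    calc p 0 * p (i + 1 + j) = p 0 * p (i + (j + 1)) := by rw [add_right_comm, add_assoc]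
      _ ≤ p i * p (j + 1) := ih (j + 1) (by omega)
      _ ≤ p (i + 1) * p j := by
        simpa [mul_comm] using hp.mul_succ_le_mul_succ (i := i) (j := j) (by omega)

theorem exists_geometric_envelope (hp : IsAntitoneLogConcave p) (hpm : 0 < p m)
    (hdesc : ((m : ℝ) + 2) * p (m + 1) ≤ (m + 1) * p m)
    (hrise : ∀ l < m, ((l : ℝ) + 1) * p l < (l + 2) * p (l + 1)) :
    ∃ ρ ∈ Set.Icc ((m : ℝ) / (m + 1)) ((m + 1) / (m + 2)), ∀ k, p k * ρ ^ m ≤ p m * ρ ^ k := by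
  set q := p (m + 1) / p m
  have hq : q * p m = p (m + 1) := div_mul_cancel₀ _ hpm.ne'
  refine ⟨max q (m / (m + 1)), ⟨le_max_right _ _, max_le ?_ ?_⟩,
    mul_pow_le_mul_pow_of_ratio (le_max_of_le_right (by positivity)) (fun k hk => ?_)
      (fun k hk => ?_)⟩
  · rw [div_le_div_iff₀ hpm (by positivity)]
    linarith
  · rw [div_le_div_iff₀ (by positivity) (by positivity)]
    nlinarith
  · rw [max_mul_of_nonneg _ _ (hp.nonneg k)]
    refine max_le (le_of_mul_le_mul_right ?_ hpm) ?_
    · calc q * p k * p m = p (m + 1) * p k := by rw [← hq]; ring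
        _ ≤ p m * p (k + 1) := hp.mul_succ_le_mul_succ hk.le
        _ = p (k + 1) * p m := mul_comm _ _
    · obtain ⟨l, rfl⟩ : ∃ l, m = l + 1 := ⟨m - 1, by omega⟩
      have hcross := hp.mul_succ_le_mul_succ (i := k) (j := l) (by omega)
      have hl := hrise l (by omega)
      rw [div_mul_eq_mul_div, div_le_iff₀ (by positivity)]
      refine le_of_mul_le_mul_right ?_ hpm
      push_cast
      nlinarith [mul_le_mul_of_nonneg_left hcross (show (0 : ℝ) ≤ l + 1 by positivity),
        mul_le_mul_of_nonneg_right hl.le (hp.nonneg (k + 1))]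
  · refine le_trans ?_ (mul_le_mul_of_nonneg_right (le_max_left _ _) (hp.nonneg k))
    refine le_of_mul_le_mul_right ?_ hpm
    calc p (k + 1) * p m ≤ p k * p (m + 1) := hp.mul_succ_le_mul_succ hk
      _ = q * p k * p m := by rw [← hq]; ring

theorem exists_exp_neg_one_lt_succ_mul (hp : IsAntitoneLogConcave p) (hsum : HasSum p 1) :
    ∃ n : ℕ, exp (-1) < (n + 1) * p n := by
  have h0 : 0 < p 0 := by
    refine (hp.nonneg 0).lt_of_ne fun h => one_ne_zero (hsum.unique ?_)
    convert hasSum_zero with n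
    exact le_antisymm (h ▸ hp.antitone n.zero_le) (hp.nonneg n)
  obtain ⟨m, hpm, hdesc, hrise⟩ := exists_first_descent_succ_mul hp.nonneg hsum.summable h0
  obtain ⟨ρ, hρ, hdom⟩ := hp.exists_geometric_envelope hpm hdesc hrise
  have hρ0 : 0 ≤ ρ := le_trans (by positivity) hρ.1
  have hρ1 : ρ < 1 := hρ.2.trans_lt ((div_lt_one (by positivity)).2 (by linarith))
  exact ⟨m, (exp_neg_one_lt_succ_mul_one_sub_mul_pow hρ).trans_le
    (mul_le_mul_of_nonneg_left (one_sub_mul_pow_le_of_hasSum hsum hρ0 hρ1 hdom) (by positivity))⟩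

end IsAntitoneLogConcave

end

section

variable {f : ℤ → ℝ}

theorem summable_mul_sub (h0 : ∀ k, 0 ≤ f k) (h1 : ∀ k, f k ≤ 1) (hS : Summable f) (k : ℤ) :
    Summable fun j => f j * f (k - j) :=
  hS.of_nonneg_of_le (fun _ => mul_nonneg (h0 _) (h0 _))
    fun j => mul_le_of_le_one_right (h0 j) (h1 _)

theorem bddAbove_range_tsum_mul_sub (h0 : ∀ k, 0 ≤ f k) (h1 : ∀ k, f k ≤ 1) (hS : Summable f) :
    BddAbove (Set.range fun k => ∑' j, f j * f (k - j)) :=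
  ⟨∑' j, f j, Set.forall_mem_range.2 fun k => (summable_mul_sub h0 h1 hS k).tsum_le_tsum
    (fun j => mul_le_of_le_one_right (h0 j) (h1 _)) hS⟩

theorem succ_mul_le_tsum_mul_sub (h0 : ∀ k, 0 ≤ f k) {c : ℝ} (n : ℕ)
    (hS : Summable fun j => f j * f (n - j)) (hc : ∀ i ≤ n, c ≤ f i * f (n - i)) :
    (n + 1) * c ≤ ∑' j, f j * f (n - j) := by
  calc (n + 1) * c = ∑ i ∈ range (n + 1), c := by simp
    _ ≤ ∑ i ∈ range (n + 1), f i * f (n - i) :=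
        sum_le_sum fun i hi => hc i (Nat.lt_succ_iff.1 (mem_range.1 hi))
    _ = ∑ j ∈ (range (n + 1)).map Nat.castEmbedding, f j * f (n - j) := by rw [sum_map]; rfl
    _ ≤ _ := hS.sum_le_tsum _ fun j _ => mul_nonneg (h0 _) (h0 _)

end

/-- For a monotone (non-increasing, supported on `ℤ₊`) log-concave pmf `f` on `ℤ`:
`max_k (f ⋆ f)(k) > e⁻¹ · max_k f(k)`, i.e. `H_∞(X+Y) < H_∞(X) + 1`
for i.i.d. `X, Y` with pmf `f`. -/
theorem discrete_hinf_reverse_epi (f : ℤ → ℝ)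
    (h0 : ∀ k, 0 ≤ f k) (h1 : ∀ k, f k ≤ 1) (hsum : ∑' k : ℤ, f k = 1)
    (hsupp : ∀ k : ℤ, k < 0 → f k = 0)
    (hmono : ∀ k : ℤ, 0 ≤ k → f (k + 1) ≤ f k)
    (hlc : ∀ k : ℤ, f k * f (k + 2) ≤ f (k + 1) ^ 2) :
    Real.exp (-1) * (⨆ k : ℤ, f k) < ⨆ k : ℤ, ∑' j : ℤ, f j * f (k - j) := by
  have hf : IsAntitoneLogConcave fun n : ℕ => f n :=
    { nonneg := fun n => h0 n
      antitone := antitone_nat_of_succ_le fun n => by simpa using hmono n n.cast_nonneg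
      mul_le_sq := fun n => by simpa using hlc n }
  have hS : Summable f := by
    by_contra h
    simp [tsum_eq_zero_of_not_summable h] at hsum
  have hsumℕ : HasSum (fun n : ℕ => f n) 1 := by
    refine (Nat.cast_injective.hasSum_iff fun k hk => hsupp k ?_).2 (hsum ▸ hS.hasSum)
    exact not_le.1 fun hk' => hk ⟨k.toNat, Int.toNat_of_nonneg hk'⟩
  obtain ⟨n, hn⟩ := hf.exists_exp_neg_one_lt_succ_mul hsumℕ
  have hmax : ∀ k, f k ≤ f 0 := fun k => by
    rcases lt_or_ge k 0 with hk | hk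
    · exact hsupp k hk ▸ h0 0
    · lift k to ℕ using hk
      exact hf.antitone k.zero_le
  have hf0 : 0 < f 0 := by nlinarith [exp_pos (-1), h0 n, hmax n]
  calc exp (-1) * ⨆ k, f k = exp (-1) * f 0 := by
        rw [le_antisymm (ciSup_le hmax) (le_ciSup ⟨f 0, Set.forall_mem_range.2 hmax⟩ 0)]
    _ < (n + 1) * f n * f 0 := mul_lt_mul_of_pos_right hn hf0
    _ = (n + 1) * (f 0 * f n) := by ring
    _ ≤ ∑' j, f j * f (n - j) :=
        succ_mul_le_tsum_mul_sub h0 n (summable_mul_sub h0 h1 hS n) fun i hi => by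
          simpa [Nat.add_sub_cancel' hi, Nat.cast_sub hi] using hf.mul_add_le_mul i (n - i)
    _ ≤ ⨆ k : ℤ, ∑' j : ℤ, f j * f (k - j) := le_ciSup (bddAbove_range_tsum_mul_sub h0 h1 hS) _
end
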